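/- Let G = (V, E) be a directed graph with n = |V| ≥ 2, and let m_G ≥ 1 be the number of paths of length n−1 in G. Let B = (Q, Δ, {q_1}) be any tree automaton over F_2 with unique final state q_1 whose language L(B) is exactly the set of terms [A_{w_{n−1}} A_{w_{n−2}} … A_{w_1} A_{w_0}] for (w_0, …, w_{n−1}) a non-Hamiltonian path of length n−1 in G. Let A_{m_G} = (Q_1, Δ_1, {q_k}) be the tree automaton over F_1 associated with m_G, with Q ∩ Q_1 = {q_1}, and let D_G = (Q ∪ Q_1, (Δ ∪ Δ_1) \ {A → q_1}, {q_k}) over F_1 ∪ F_2. Then the TAGED (D_G, ∅, {(q_1, q_1)}) accepts the empty language if and only if G has a Hamiltonian path. -/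

import Mathlib

/-- Terms over a ranked alphabet: a set `S` of symbols with arity function
`ar`; a term is a symbol applied to as many subterms as its arity. -/
inductive Term (S : Type*) (ar : S → ℕ) : Type _
  | node (s : S) (c : Fin (ar s) → Term S ar) : Term S ar

/-- A (bottom-up) tree automaton over the ranked alphabet `(S, ar)` with state
type `Q`: a set of rules `f(q₁, …, q_n) → q` and a set of final states. -/
structure TreeAut (S : Type*) (ar : S → ℕ) (Q : Type*) where
  rules : Set (Σ s : S, (Fin (ar s) → Q) × Q)
  final : Set Q

/-- The subterm of `t` at position `p` (a list of child indices), if any. -/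
def subtermAt {S : Type*} {ar : S → ℕ} : Term S ar → List ℕ → Option (Term S ar)
  | t, [] => some t
  | Term.node s c, i :: p => if h : i < ar s then subtermAt (c ⟨i, h⟩) p else none

/-- `ρ` is a run of the automaton `A` on the term `t`: at every position of
`t` carrying a symbol `s`, the rule `s(ρ(p·1), …, ρ(p·n)) → ρ(p)` is in `A`. -/
def IsRun {S : Type*} {ar : S → ℕ} {Q : Type*} (A : TreeAut S ar Q)
    (t : Term S ar) (ρ : List ℕ → Q) : Prop :=
  ∀ (p : List ℕ) (s : S) (c : Fin (ar s) → Term S ar),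
    subtermAt t p = some (Term.node s c) →
    (⟨s, (fun i => ρ (p ++ [i.val]), ρ p)⟩ : Σ s : S, (Fin (ar s) → Q) × Q) ∈ A.rules

/-- `t` is accepted by the tree automaton `A`: some run on `t` labels the
root with a final state. -/
def Accepts {S : Type*} {ar : S → ℕ} {Q : Type*} (A : TreeAut S ar Q)
    (t : Term S ar) : Prop :=
  ∃ ρ : List ℕ → Q, IsRun A t ρ ∧ ρ [] ∈ A.final

/-- `t` is accepted by the TAGED `(A, R₁, R₂)`: some accepting run `ρ` on `t`
satisfies the global equality constraints `R₁` and disequality constraints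
`R₂` on subterms. -/
def TagedAccepts {S : Type*} {ar : S → ℕ} {Q : Type*} (A : TreeAut S ar Q)
    (R1 R2 : Set (Q × Q)) (t : Term S ar) : Prop :=
  ∃ ρ : List ℕ → Q, IsRun A t ρ ∧ ρ [] ∈ A.final ∧
    ∀ (p q : List ℕ) (tp tq : Term S ar),
      subtermAt t p = some tp → subtermAt t q = some tq →
      (((ρ p, ρ q) ∈ R1 → tp = tq) ∧ (p ≠ q → (ρ p, ρ q) ∈ R2 → tp ≠ tq))

/-- The ranked alphabet `F₁ = {f, g, A}`. -/
inductive F1Sym : Type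
  | f : F1Sym
  | g : F1Sym
  | A : F1Sym

/-- Arities in `F₁`: `f` has arity 2, `g` has arity 3, `A` has arity 0. -/
def ar1 : F1Sym → ℕ
  | .f => 2
  | .g => 3
  | .A => 0

/-- Arity function on the (disjoint) union alphabet `F₁ ∪ F'`. -/
def arU {S' : Type*} (ar' : S' → ℕ) : F1Sym ⊕ S' → ℕ :=
  Sum.elim ar1 ar'

/-- The states of the automaton `D`: the union `Q ∪ Q₁` where
`Q₁ = {q_1, …, q_k}` are the states of `A_m` and the state `q_1` of `A_m` is
identified with the (final) state `q1` of `B`.  `stD q1 i` is the state `q_i`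
of `A_m` viewed in this union. -/
def stD {Q : Type*} (q1 : Q) (i : ℕ) : Q ⊕ ℕ :=
  if i = 1 then Sum.inl q1 else Sum.inr i

/-- The automaton `D = (Q ∪ Q₁, (Δ ∪ Δ₁) \ {A → q₁}, {q_k})` over `F₁ ∪ F'`:
its rules are the rules of `B` (with states embedded on the left) together
with the rules of `A_m` other than `A → q₁` (for `m` with binary
representation `α₁ … α_k`), and its unique final state is `q_k`. -/
def DAut {S' : Type*} (ar' : S' → ℕ) {Q : Type*} (B : TreeAut S' ar' Q)
    (q1 : Q) (α : ℕ → Bool) (k : ℕ) : TreeAut (F1Sym ⊕ S') (arU ar') (Q ⊕ ℕ) where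
  rules := {r |
    (∃ (s : S') (qs : Fin (ar' s) → Q) (q : Q),
      (⟨s, (qs, q)⟩ : Σ s : S', (Fin (ar' s) → Q) × Q) ∈ B.rules ∧
      r = ⟨Sum.inr s, (fun i => Sum.inl (qs i), Sum.inl q)⟩)
    ∨ (∃ i : ℕ, 1 ≤ i ∧ i ≤ k - 1 ∧ α (i + 1) = false ∧
      r = ⟨Sum.inl F1Sym.f, (fun _ => stD q1 i, stD q1 (i + 1))⟩)
    ∨ (∃ i : ℕ, 1 ≤ i ∧ i ≤ k - 1 ∧ α (i + 1) = true ∧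
      r = ⟨Sum.inl F1Sym.g,
        (fun j => if j.val = 2 then stD q1 1 else stD q1 i, stD q1 (i + 1))⟩)}
  final := {stD q1 k}

/-- The ranked alphabet `F₂ = {h} ∪ {A_v : v ∈ V}`. -/
inductive F2Sym (V : Type*) : Type _
  | h : F2Sym V
  | Av : V → F2Sym V

/-- Arities in `F₂`: `h` has arity 2 and each `A_v` has arity 0. -/
def ar2 (V : Type*) : F2Sym V → ℕ
  | .h => 2
  | .Av _ => 0

/-- `codeT k w` is the term `[A_{w_k} A_{w_{k-1}} … A_{w_1} A_{w_0}]`, i.e.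
`h(A_{w_k}, h(A_{w_{k-1}}, …, h(A_{w_1}, A_{w_0})…))` over `F₂`; for `k = 0`
it is just `A_{w_0}`. -/
def codeT {V : Type*} : (k : ℕ) → (Fin (k + 1) → V) → Term (F2Sym V) (ar2 V)
  | 0, w => Term.node (F2Sym.Av (w 0)) (fun i => i.elim0)
  | k + 1, w =>
      Term.node F2Sym.h
        (fun j => if j.val = 0 then
            Term.node (F2Sym.Av (w (Fin.last (k + 1)))) (fun i => i.elim0)
          else codeT k (fun i => w i.castSucc))

/-- `w : Fin (k+1) → V` is a path of length `k` in the directed graph with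
edge relation `E`. -/
def IsPath {V : Type*} (E : V → V → Prop) {k : ℕ} (w : Fin (k + 1) → V) : Prop :=
  ∀ i : Fin k, E (w i.castSucc) (w i.succ)


namespace TagedAux

variable {S : Type*} {ar : S → ℕ} {Qs : Type*}

theorem subtermAt_nil (t : Term S ar) : subtermAt t [] = some t := by
  cases t; rfl

theorem subtermAt_append (t : Term S ar) (p q : List ℕ) :
    subtermAt t (p ++ q) = (subtermAt t p).bind (fun u => subtermAt u q) := by
  induction p generalizing t with
  | nil => simp [subtermAt]
  | cons i p ih =>
    cases t with
    | node s c =>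
      simp only [List.cons_append, subtermAt]
      split
      · exact ih _
      · rfl

theorem subtermAt_child {t : Term S ar} {p : List ℕ} {s : S} {c : Fin (ar s) → Term S ar}
    (h : subtermAt t p = some (Term.node s c)) (i : Fin (ar s)) :
    subtermAt t (p ++ [i.val]) = some (c i) := by
  rw [subtermAt_append, h]
  show subtermAt (Term.node s c) [i.val] = some (c i)
  simp only [subtermAt]
  rw [dif_pos i.isLt]

theorem IsRun.restrict {A : TreeAut S ar Qs} {t t' : Term S ar} {ρ : List ℕ → Qs}
    (h : IsRun A t ρ) {p : List ℕ} (hp : subtermAt t p = some t') :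
    IsRun A t' (fun q => ρ (p ++ q)) := by
  intro q s c hq
  have hsub : subtermAt t (p ++ q) = some (Term.node s c) := by
    rw [subtermAt_append, hp]; exact hq
  have h2 := h (p ++ q) s c hsub
  simpa [List.append_assoc] using h2

/-- number of nodes of a term -/
def tsize : Term S ar → ℕ
  | .node _ c => (∑ i, tsize (c i)) + 1

theorem tsize_child_lt (s : S) (c : Fin (ar s) → Term S ar) (i : Fin (ar s)) :
    tsize (c i) < tsize (Term.node s c) := by
  have : tsize (c i) ≤ ∑ j, tsize (c j) :=
    Finset.single_le_sum (f := fun j => tsize (c j)) (fun _ _ => Nat.zero_le _)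
      (Finset.mem_univ i)
  simpa [tsize, Nat.lt_succ_iff] using this

theorem tsize_subterm_le {t t' : Term S ar} {p : List ℕ}
    (h : subtermAt t p = some t') : tsize t' + p.length ≤ tsize t := by
  induction p generalizing t with
  | nil => simp [subtermAt] at h; subst h; simp
  | cons i p ih =>
    cases t with
    | node s c =>
      simp only [subtermAt] at h
      by_cases hi : i < ar s
      · rw [dif_pos hi] at h
        have h1 := ih h
        have h2 := tsize_child_lt s c ⟨i, hi⟩
        simp only [List.length_cons]
        omega
      · rw [dif_neg hi] at h; cases h

theorem tsize_subterm_lt {t t' : Term S ar} {p : List ℕ}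
    (h : subtermAt t p = some t') (hp : p ≠ []) : tsize t' < tsize t := by
  have := tsize_subterm_le h
  have : 1 ≤ p.length := List.length_pos_iff.mpr hp
  omega

end TagedAux
namespace TagedAux

variable {S' : Type*} {ar' : S' → ℕ} {Q : Type*}

@[simp] theorem arU_inl (s : F1Sym) : arU ar' (Sum.inl s) = ar1 s := rfl
@[simp] theorem arU_inr (s : S') : arU ar' (Sum.inr s) = ar' s := rfl

/-- embedding of terms over `F'` into terms over `F₁ ⊕ F'` -/
def embed : Term S' ar' → Term (F1Sym ⊕ S') (arU ar')
  | .node s c => .node (Sum.inr s) (fun i => embed (c i))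

theorem embed_injective : Function.Injective (embed (ar' := ar')) := by
  intro a
  induction a with
  | node s c ih =>
    intro b h
    cases b with
    | node s' c' =>
      rw [embed, embed] at h
      injection h with h1 h2
      injection h1 with h1
      subst h1
      have h2 := eq_of_heq h2
      congr 1
      funext i
      exact ih i (congrFun h2 i)

theorem subtermAt_embed (t : Term S' ar') (p : List ℕ) :
    subtermAt (embed t) p = Option.map embed (subtermAt t p) := by
  induction p generalizing t with
  | nil => simp [subtermAt]
  | cons i p ih =>
    cases t with
    | node s c =>
      rw [embed]
      show (if h : i < ar' s then subtermAt (embed (c ⟨i, h⟩)) p else none) = _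
      simp only [subtermAt]
      split
      · exact ih _
      · rfl

theorem isRun_embed {B : TreeAut S' ar' Q} {t : Term S' ar'} {σ : List ℕ → Q}
    (h : IsRun B t σ) (q1 : Q) (α : ℕ → Bool) (k : ℕ) :
    IsRun (DAut ar' B q1 α k) (embed t) (fun p => Sum.inl (σ p)) := by
  intro p s c hp
  rw [subtermAt_embed] at hp
  cases ht : subtermAt t p with
  | none => rw [ht] at hp; cases hp
  | some u =>
    rw [ht] at hp
    cases u with
    | node s₂ c₂ =>
      rw [Option.map_some] at hp
      rw [embed] at hp
      injection hp with hp
      injection hp with h1 h2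
      subst h1
      left
      exact ⟨s₂, fun i => σ (p ++ [i.val]), σ p, h p s₂ c₂ ht, rfl⟩

end TagedAux
namespace TagedAux

variable {S' : Type*} {ar' : S' → ℕ} {Q : Type*}

theorem stD_ne_one {q1 : Q} {i : ℕ} (hi : i ≠ 1) : stD q1 i = Sum.inr i := by
  rw [stD, if_neg hi]

theorem extract_embed {B : TreeAut S' ar' Q} {q1 : Q} {α : ℕ → Bool} {k : ℕ}
    {t : Term (F1Sym ⊕ S') (arU ar')} {ρ : List ℕ → Q ⊕ ℕ}
    (h : IsRun (DAut ar' B q1 α k) t ρ) (t' : Term (F1Sym ⊕ S') (arU ar')) :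
    ∀ (p : List ℕ) (q : Q), subtermAt t p = some t' → ρ p = Sum.inl q →
      ∃ t₂, t' = embed t₂ := by
  induction t' with
  | node s c ih =>
    intro p q hp hq
    have hrule := h p s c hp
    rcases hrule with ⟨s₂, qs, q', _, hr⟩ | ⟨i, hi1, _, _, hr⟩ | ⟨i, hi1, _, _, hr⟩
    · injection hr with h1 h2
      subst h1
      have h2 := eq_of_heq h2
      have h3 : (fun i => ρ (p ++ [i.val])) = fun i => Sum.inl (qs i) :=
        congrArg Prod.fst h2
      choose t₂ ht₂ using fun i =>
        ih i (p ++ [i.val]) (qs i) (subtermAt_child hp i) (congrFun h3 i)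
      refine ⟨Term.node s₂ t₂, ?_⟩
      show _ = Term.node (Sum.inr s₂) (fun i => embed (t₂ i))
      congr 1
      funext i
      exact ht₂ i
    · injection hr with h1 h2
      subst h1
      have h4 : ρ p = stD q1 (i + 1) := congrArg Prod.snd (eq_of_heq h2)
      rw [hq, stD_ne_one (by omega)] at h4
      cases h4
    · injection hr with h1 h2
      subst h1
      have h4 : ρ p = stD q1 (i + 1) := congrArg Prod.snd (eq_of_heq h2)
      rw [hq, stD_ne_one (by omega)] at h4
      cases h4

theorem extract_Brun {B : TreeAut S' ar' Q} {q1 : Q} {α : ℕ → Bool} {k : ℕ}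
    {t : Term (F1Sym ⊕ S') (arU ar')} {ρ : List ℕ → Q ⊕ ℕ} {p : List ℕ}
    {t₂ : Term S' ar'} {q : Q}
    (h : IsRun (DAut ar' B q1 α k) t ρ)
    (hp : subtermAt t p = some (embed t₂)) (hq : ρ p = Sum.inl q) :
    ∃ σ : List ℕ → Q, IsRun B t₂ σ ∧ σ [] = q := by
  refine ⟨fun r => Sum.elim id (fun _ => q) (ρ (p ++ r)), ?_, ?_⟩
  · intro p' s₂ c₂ hp'
    have hsub : subtermAt t (p ++ p') = some (Term.node (Sum.inr s₂) (fun i => embed (c₂ i))) := by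
      rw [subtermAt_append, hp]
      show subtermAt (embed t₂) p' = _
      rw [subtermAt_embed, hp', Option.map_some]
      rw [embed]
    have hrule := h (p ++ p') (Sum.inr s₂) (fun i => embed (c₂ i)) hsub
    rcases hrule with ⟨s₂', qs, q', hB, hr⟩ | ⟨i, _, _, _, hr⟩ | ⟨i, _, _, _, hr⟩
    · injection hr with h1 h2
      injection h1 with h1
      subst h1
      have h2 := eq_of_heq h2
      have h3 : (fun i => ρ ((p ++ p') ++ [i.val])) = fun i => Sum.inl (qs i) :=
        congrArg Prod.fst h2
      have h4 : ρ (p ++ p') = Sum.inl q' := congrArg Prod.snd h2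
      have hXY : (fun i => Sum.elim (id : Q → Q) (fun _ => q) (ρ (p ++ (p' ++ [i.val])))) = qs := by
        funext i
        rw [← List.append_assoc, congrFun h3 i]
        rfl
      have hY : Sum.elim (id : Q → Q) (fun _ => q) (ρ (p ++ p')) = q' := by
        rw [h4]; rfl
      rw [show (⟨s₂, (fun i => Sum.elim (id : Q → Q) (fun _ => q) (ρ (p ++ (p' ++ [i.val]))),
          Sum.elim (id : Q → Q) (fun _ => q) (ρ (p ++ p')))⟩ :
          Σ s : S', (Fin (ar' s) → Q) × Q) = ⟨s₂, (qs, q')⟩ by rw [hXY, hY]]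
      exact hB
    · injection hr with h1 h2
      cases h1
    · injection hr with h1 h2
      cases h1
  · show Sum.elim _ _ (ρ (p ++ [])) = q
    rw [List.append_nil, hq]
    rfl

end TagedAux
namespace TagedAux

variable {S' : Type*} {ar' : S' → ℕ} {Q : Type*}

/-- value of the binary string `α₁…α_j` -/
def Ssum (α : ℕ → Bool) (j : ℕ) : ℕ :=
  ∑ i ∈ Finset.Icc 1 j, if α i then 2 ^ (j - i) else 0

theorem Ssum_one {α : ℕ → Bool} (hα : α 1 = true) : Ssum α 1 = 1 := by
  simp [Ssum, hα]

theorem Ssum_succ (α : ℕ → Bool) (j : ℕ) :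
    Ssum α (j + 1) = 2 * Ssum α j + (if α (j + 1) then 1 else 0) := by
  rw [Ssum, Finset.sum_Icc_succ_top (by omega : 1 ≤ j + 1)]
  have h1 : ∑ i ∈ Finset.Icc 1 j, (if α i then 2 ^ (j + 1 - i) else 0)
      = 2 * Ssum α j := by
    rw [Ssum, Finset.mul_sum]
    apply Finset.sum_congr rfl
    intro i hi
    rw [Finset.mem_Icc] at hi
    have hji : j + 1 - i = (j - i) + 1 := by omega
    rw [hji, pow_succ]
    split <;> ring
  rw [h1, Nat.sub_self, pow_zero]

theorem append_index_ne {p : List ℕ} {i j : ℕ} (hij : i ≠ j) (r₀ r₁ : List ℕ) :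
    p ++ [i] ++ r₀ ≠ p ++ [j] ++ r₁ := by
  intro h
  simp only [List.append_assoc, List.singleton_append] at h
  have h2 := List.append_cancel_left h
  injection h2 with h3
  exact hij h3

theorem count_q1 {B : TreeAut S' ar' Q} {q1 : Q} {α : ℕ → Bool} {k : ℕ}
    (hα : α 1 = true)
    {t : Term (F1Sym ⊕ S') (arU ar')} {ρ : List ℕ → Q ⊕ ℕ}
    (h : IsRun (DAut ar' B q1 α k) t ρ) :
    ∀ j, 1 ≤ j → ∀ (p : List ℕ) (t' : Term (F1Sym ⊕ S') (arU ar')),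
      subtermAt t p = some t' → ρ p = stD q1 j →
      ∃ P : Finset (List ℕ), Ssum α j ≤ P.card ∧
        ∀ q ∈ P, (∃ r, q = p ++ r) ∧ (subtermAt t q).isSome ∧ ρ q = Sum.inl q1 := by
  intro j hj
  induction j, hj using Nat.le_induction with
  | base =>
    intro p t' hp hρ
    refine ⟨{p}, by rw [Ssum_one hα]; simp, ?_⟩
    intro q hq
    rw [Finset.mem_singleton] at hq
    subst hq
    exact ⟨⟨[], by simp⟩, by rw [hp]; rfl, by rw [hρ]; rfl⟩
  | succ j hj ih =>
    intro p t' hp hρ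
    cases t' with
    | node s c =>
      have hrule := h p s c hp
      rcases hrule with ⟨s₂, qs, q', _, hr⟩ | ⟨i, hi1, _, hαf, hr⟩ | ⟨i, hi1, _, hαt, hr⟩
      · injection hr with h1 h2
        subst h1
        have h4 : ρ p = Sum.inl q' := congrArg Prod.snd (eq_of_heq h2)
        rw [hρ, stD_ne_one (by omega)] at h4
        cases h4
      · -- f-rule
        injection hr with h1 h2
        subst h1
        have h2 := eq_of_heq h2
        have hχ : (fun ii : Fin (arU ar' (Sum.inl F1Sym.f)) => ρ (p ++ [ii.val]))
            = fun _ => stD q1 i :=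
          congrArg Prod.fst h2
        have h4 : ρ p = stD q1 (i + 1) := congrArg Prod.snd h2
        rw [hρ] at h4
        rw [stD_ne_one (by omega : j + 1 ≠ 1), stD_ne_one (by omega : i + 1 ≠ 1)] at h4
        injection h4 with h4
        have hij : i = j := by omega
        subst hij
        have hαj : α (i + 1) = false := hαf
        have hρ0 : ρ (p ++ [0]) = stD q1 i := congrFun hχ ⟨0, by show (0:ℕ) < 2; omega⟩
        have hρ1 : ρ (p ++ [1]) = stD q1 i := congrFun hχ ⟨1, by show (1:ℕ) < 2; omega⟩
        obtain ⟨P₀, hP₀c, hP₀⟩ := ih (p ++ [0]) _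
          (subtermAt_child hp ⟨0, by show (0:ℕ) < 2; omega⟩) hρ0
        obtain ⟨P₁, hP₁c, hP₁⟩ := ih (p ++ [1]) _
          (subtermAt_child hp ⟨1, by show (1:ℕ) < 2; omega⟩) hρ1
        have hdis : Disjoint P₀ P₁ := by
          rw [Finset.disjoint_left]
          intro a ha0 ha1
          obtain ⟨⟨r₀, hr₀⟩, -, -⟩ := hP₀ a ha0
          obtain ⟨⟨r₁, hr₁⟩, -, -⟩ := hP₁ a ha1
          exact append_index_ne (by omega) r₀ r₁ (hr₀.symm.trans hr₁)
        refine ⟨P₀ ∪ P₁, ?_, ?_⟩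
        · rw [Finset.card_union_of_disjoint hdis, Ssum_succ, hαj]
          simp only [Bool.false_eq_true, if_false]
          omega
        · intro a ha
          rw [Finset.mem_union] at ha
          rcases ha with ha | ha
          · obtain ⟨⟨r, hrr⟩, h5, h6⟩ := hP₀ a ha
            exact ⟨⟨0 :: r, by simp [hrr]⟩, h5, h6⟩
          · obtain ⟨⟨r, hrr⟩, h5, h6⟩ := hP₁ a ha
            exact ⟨⟨1 :: r, by simp [hrr]⟩, h5, h6⟩
      · -- g-rule
        injection hr with h1 h2
        subst h1
        have h2 := eq_of_heq h2
        have hχ : (fun ii : Fin (arU ar' (Sum.inl F1Sym.g)) => ρ (p ++ [ii.val]))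
            = fun jj => if jj.val = 2 then stD q1 1 else stD q1 i :=
          congrArg Prod.fst h2
        have h4 : ρ p = stD q1 (i + 1) := congrArg Prod.snd h2
        rw [hρ] at h4
        rw [stD_ne_one (by omega : j + 1 ≠ 1), stD_ne_one (by omega : i + 1 ≠ 1)] at h4
        injection h4 with h4
        have hij : i = j := by omega
        subst hij
        have hαj : α (i + 1) = true := hαt
        have hρ0 : ρ (p ++ [0]) = stD q1 i := congrFun hχ ⟨0, by show (0:ℕ) < 3; omega⟩
        have hρ1 : ρ (p ++ [1]) = stD q1 i := congrFun hχ ⟨1, by show (1:ℕ) < 3; omega⟩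
        have hρ2 : ρ (p ++ [2]) = Sum.inl q1 := congrFun hχ ⟨2, by show (2:ℕ) < 3; omega⟩
        obtain ⟨P₀, hP₀c, hP₀⟩ := ih (p ++ [0]) _
          (subtermAt_child hp ⟨0, by show (0:ℕ) < 3; omega⟩) hρ0
        obtain ⟨P₁, hP₁c, hP₁⟩ := ih (p ++ [1]) _
          (subtermAt_child hp ⟨1, by show (1:ℕ) < 3; omega⟩) hρ1
        have hsub2 := subtermAt_child hp ⟨2, by show (2:ℕ) < 3; omega⟩
        have hdis : Disjoint P₀ P₁ := by
          rw [Finset.disjoint_left]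
          intro a ha0 ha1
          obtain ⟨⟨r₀, hr₀⟩, -, -⟩ := hP₀ a ha0
          obtain ⟨⟨r₁, hr₁⟩, -, -⟩ := hP₁ a ha1
          exact append_index_ne (by omega) r₀ r₁ (hr₀.symm.trans hr₁)
        have hx : p ++ [2] ∉ P₀ ∪ P₁ := by
          rw [Finset.mem_union]
          rintro (ha | ha)
          · obtain ⟨⟨r₀, hr₀⟩, -, -⟩ := hP₀ _ ha
            exact append_index_ne (by omega : (2:ℕ) ≠ 0) [] r₀ (by rw [List.append_nil]; exact hr₀)
          · obtain ⟨⟨r₁, hr₁⟩, -, -⟩ := hP₁ _ ha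
            exact append_index_ne (by omega : (2:ℕ) ≠ 1) [] r₁ (by rw [List.append_nil]; exact hr₁)
        refine ⟨insert (p ++ [2]) (P₀ ∪ P₁), ?_, ?_⟩
        · rw [Finset.card_insert_of_notMem hx,
            Finset.card_union_of_disjoint hdis, Ssum_succ, hαj]
          simp only [if_true]
          omega
        · intro a ha
          rw [Finset.mem_insert, Finset.mem_union] at ha
          rcases ha with rfl | ha | ha
          · exact ⟨⟨[2], rfl⟩, by rw [hsub2]; rfl, hρ2⟩
          · obtain ⟨⟨r, hrr⟩, h5, h6⟩ := hP₀ a ha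
            exact ⟨⟨0 :: r, by simp [hrr]⟩, h5, h6⟩
          · obtain ⟨⟨r, hrr⟩, h5, h6⟩ := hP₁ a ha
            exact ⟨⟨1 :: r, by simp [hrr]⟩, h5, h6⟩

end TagedAux
namespace TagedAux

variable {V : Type*} {Q : Type*}

theorem tsize_leaf {S : Type*} {ar : S → ℕ} (s : S) (h0 : ar s = 0)
    (c : Fin (ar s) → Term S ar) : tsize (Term.node s c) = 1 := by
  rw [tsize]
  have he : IsEmpty (Fin (ar s)) := by rw [h0]; infer_instance
  rw [Finset.univ_eq_empty, Finset.sum_empty]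

theorem tsize_codeT (k : ℕ) (w : Fin (k + 1) → V) :
    tsize (codeT k w) = 2 * k + 1 := by
  induction k with
  | zero => rw [codeT, tsize_leaf (F2Sym.Av (w 0)) rfl]
  | succ k ih =>
    rw [codeT, tsize]
    have h2 : (∑ i : Fin (ar2 V F2Sym.h),
        tsize (if (i:ℕ) = 0 then Term.node (F2Sym.Av (w (Fin.last (k + 1)))) (fun i => i.elim0)
          else codeT k (fun i => w i.castSucc)))
        = tsize (Term.node (F2Sym.Av (w (Fin.last (k + 1)))) (fun i => i.elim0)
            : Term (F2Sym V) (ar2 V))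
          + tsize (codeT k (fun i => w i.castSucc)) :=
      Fin.sum_univ_two (f := fun i : Fin (ar2 V F2Sym.h) =>
        tsize (if (i:ℕ) = 0 then Term.node (F2Sym.Av (w (Fin.last (k + 1)))) (fun i => i.elim0)
          else codeT k (fun i => w i.castSucc)))
    rw [h2, ih, tsize_leaf (F2Sym.Av (w (Fin.last (k + 1)))) rfl]
    ring

theorem codeT_injective (k : ℕ) (w w' : Fin (k + 1) → V)
    (h : codeT k w = codeT k w') : w = w' := by
  induction k with
  | zero =>
    rw [codeT, codeT] at h
    injection h with h1 h2
    injection h1 with h1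
    funext i
    have hi : i = 0 := Fin.ext (by omega)
    rw [hi]; exact h1
  | succ k ih =>
    rw [codeT, codeT] at h
    injection h with h1 h2
    have hlast : w (Fin.last (k + 1)) = w' (Fin.last (k + 1)) := by
      have h0 := congrFun h2 ⟨0, by show (0:ℕ) < 2; omega⟩
      simp at h0
      exact h0.1
    have hrest : (fun i : Fin (k+1) => w i.castSucc) = fun i => w' i.castSucc := by
      have h1' := congrFun h2 ⟨1, by show (1:ℕ) < 2; omega⟩
      simp at h1'
      exact ih _ _ h1'
    funext i
    rcases Fin.eq_castSucc_or_eq_last i with ⟨j, rfl⟩ | rfl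
    · exact congrFun hrest j
    · exact hlast

theorem no_inner_q1 {B : TreeAut (F2Sym V) (ar2 V) Q} {q1 : Q}
    (hBf : B.final = {q1}) {m : ℕ}
    (hLB' : ∀ t, Accepts B t → ∃ w : Fin (m + 2) → V, t = codeT (m + 1) w)
    {w : Fin (m + 2) → V} {σ : List ℕ → Q}
    (hrun : IsRun B (codeT (m + 1) w) σ) :
    ∀ (p : List ℕ) (t' : Term (F2Sym V) (ar2 V)),
      subtermAt (codeT (m + 1) w) p = some t' → σ p = q1 → p = [] := by
  intro p t' hp hq
  by_contra hne
  have hrest := IsRun.restrict hrun hp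
  have hacc : Accepts B t' := by
    refine ⟨_, hrest, ?_⟩
    rw [hBf]
    show σ (p ++ []) ∈ ({q1} : Set Q)
    rw [List.append_nil, hq]
    rfl
  obtain ⟨w', hw'⟩ := hLB' t' hacc
  have h1 : tsize t' < tsize (codeT (m + 1) w) := tsize_subterm_lt hp hne
  rw [hw', tsize_codeT, tsize_codeT] at h1
  omega

end TagedAux
namespace TagedAux

variable {S' : Type*} {ar' : S' → ℕ} {Q : Type*}

/-- counts of codes in the skeleton -/
def Cfun (α : ℕ → Bool) : ℕ → ℕ
  | 0 => 1
  | j + 1 => 2 * Cfun α j + (if α (j + 2) then 1 else 0)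

theorem Cfun_pos (α : ℕ → Bool) : ∀ j, 1 ≤ Cfun α j := by
  intro j
  induction j with
  | zero => exact le_refl 1
  | succ j ih => rw [Cfun]; omega

theorem Cfun_eq_Ssum {α : ℕ → Bool} (hα : α 1 = true) :
    ∀ j, Cfun α j = Ssum α (j + 1) := by
  intro j
  induction j with
  | zero => rw [Cfun, Ssum_one hα]
  | succ j ih =>
    rw [Cfun, ih]
    conv_rhs => rw [Ssum_succ α (j + 1)]

def pick2 {γ : Type*} (a b : γ) : Fin 2 → γ
  | ⟨0, _⟩ => a
  | ⟨1, _⟩ => b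

def pick3 {γ : Type*} (a b c : γ) : Fin 3 → γ
  | ⟨0, _⟩ => a
  | ⟨1, _⟩ => b
  | ⟨2, _⟩ => c

theorem subtermAt_node_cons {S : Type*} {ar : S → ℕ} {s : S}
    {ch : Fin (ar s) → Term S ar} {i : ℕ} (hi : i < ar s) (p : List ℕ) :
    subtermAt (Term.node s ch) (i :: p) = subtermAt (ch ⟨i, hi⟩) p := by
  show (if h : i < ar s then subtermAt (ch ⟨i, h⟩) p else none) = _
  rw [dif_pos hi]

theorem subtermAt_node_cons_none {S : Type*} {ar : S → ℕ} {s : S}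
    {ch : Fin (ar s) → Term S ar} {i : ℕ} (hi : ¬ i < ar s) (p : List ℕ) :
    subtermAt (Term.node s ch) (i :: p) = none := by
  show (if h : i < ar s then subtermAt (ch ⟨i, h⟩) p else none) = _
  rw [dif_neg hi]

/-- the skeleton term of `A_m` with codes plugged in -/
def buildT (α : ℕ → Bool) (c : ℕ → Term S' ar') : ℕ → ℕ → Term (F1Sym ⊕ S') (arU ar')
  | 0, off => embed (c off)
  | j + 1, off =>
    if α (j + 2) = true then
      Term.node (Sum.inl F1Sym.g)
        (pick3 (buildT α c j off) (buildT α c j (off + Cfun α j))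
          (embed (c (off + 2 * Cfun α j))))
    else
      Term.node (Sum.inl F1Sym.f)
        (pick2 (buildT α c j off) (buildT α c j (off + Cfun α j)))

/-- the corresponding run -/
def buildρ (α : ℕ → Bool) (q1 : Q) (σs : ℕ → List ℕ → Q) :
    ℕ → ℕ → List ℕ → Q ⊕ ℕ
  | 0, off, p => Sum.inl (σs off p)
  | j + 1, _, [] => stD q1 (j + 2)
  | j + 1, off, i :: p =>
    if i = 0 then buildρ α q1 σs j off p
    else if i = 1 then buildρ α q1 σs j (off + Cfun α j) p
    else Sum.inl (σs (off + 2 * Cfun α j) p)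

end TagedAux
namespace TagedAux

variable {S' : Type*} {ar' : S' → ℕ} {Q : Type*}

@[simp] theorem pick2_0 {γ : Type*} (a b : γ) (h : (0:ℕ) < 2) : pick2 a b ⟨0, h⟩ = a := rfl
@[simp] theorem pick2_1 {γ : Type*} (a b : γ) (h : (1:ℕ) < 2) : pick2 a b ⟨1, h⟩ = b := rfl
@[simp] theorem pick3_0 {γ : Type*} (a b c : γ) (h : (0:ℕ) < 3) : pick3 a b c ⟨0, h⟩ = a := rfl
@[simp] theorem pick3_1 {γ : Type*} (a b c : γ) (h : (1:ℕ) < 3) : pick3 a b c ⟨1, h⟩ = b := rfl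
@[simp] theorem pick3_2 {γ : Type*} (a b c : γ) (h : (2:ℕ) < 3) : pick3 a b c ⟨2, h⟩ = c := rfl

variable {α : ℕ → Bool} {q1 : Q} {σs : ℕ → List ℕ → Q} {c : ℕ → Term S' ar'}

theorem buildρ_zero (off : ℕ) (p : List ℕ) :
    buildρ α q1 σs 0 off p = Sum.inl (σs off p) := rfl

theorem buildρ_cons0 (j off : ℕ) (p : List ℕ) :
    buildρ α q1 σs (j + 1) off (0 :: p) = buildρ α q1 σs j off p := rfl

theorem buildρ_cons1 (j off : ℕ) (p : List ℕ) :
    buildρ α q1 σs (j + 1) off (1 :: p)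
      = buildρ α q1 σs j (off + Cfun α j) p := rfl

theorem buildρ_cons2 (j off : ℕ) (p : List ℕ) :
    buildρ α q1 σs (j + 1) off (2 :: p)
      = Sum.inl (σs (off + 2 * Cfun α j) p) := rfl

theorem buildρ_nil (hσr : ∀ idx, σs idx [] = q1) (j off : ℕ) :
    buildρ α q1 σs j off [] = stD q1 (j + 1) := by
  cases j with
  | zero => rw [buildρ_zero, hσr]; rfl
  | succ j => rfl

end TagedAux
namespace TagedAux

variable {S' : Type*} {ar' : S' → ℕ} {Q : Type*}
variable {B : TreeAut S' ar' Q} {q1 : Q} {α : ℕ → Bool} {k : ℕ}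
variable {c : ℕ → Term S' ar'} {σs : ℕ → List ℕ → Q} {mG : ℕ}

theorem Cfun_succ_lb (α : ℕ → Bool) (j : ℕ) : 2 * Cfun α j ≤ Cfun α (j + 1) := by
  rw [Cfun]; split <;> omega

theorem Cfun_succ_g (α : ℕ → Bool) (j : ℕ) (h : α (j + 2) = true) :
    Cfun α (j + 1) = 2 * Cfun α j + 1 := by
  rw [Cfun, if_pos h]

theorem buildT_succ_sub {j off i : ℕ} {p : List ℕ} {t' : Term (F1Sym ⊕ S') (arU ar')}
    (hp : subtermAt (buildT α c (j + 1) off) (i :: p) = some t') :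
    (i = 0 ∧ subtermAt (buildT α c j off) p = some t') ∨
    (i = 1 ∧ subtermAt (buildT α c j (off + Cfun α j)) p = some t') ∨
    (i = 2 ∧ α (j + 2) = true ∧
      subtermAt (embed (c (off + 2 * Cfun α j))) p = some t') := by
  rw [buildT] at hp
  by_cases hA : α (j + 2) = true
  · rw [if_pos hA] at hp
    by_cases h3 : i < arU ar' (Sum.inl F1Sym.g)
    · replace hp := (subtermAt_node_cons h3 p).symm.trans hp
      have h3' : i < 3 := h3
      interval_cases i
      · exact Or.inl ⟨rfl, hp⟩
      · exact Or.inr (Or.inl ⟨rfl, hp⟩)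
      · exact Or.inr (Or.inr ⟨rfl, hA, hp⟩)
    · have hp2 := (subtermAt_node_cons_none h3 p).symm.trans hp
      cases hp2
  · rw [if_neg hA] at hp
    by_cases h2 : i < arU ar' (Sum.inl F1Sym.f)
    · replace hp := (subtermAt_node_cons h2 p).symm.trans hp
      have h2' : i < 2 := h2
      interval_cases i
      · exact Or.inl ⟨rfl, hp⟩
      · exact Or.inr (Or.inl ⟨rfl, hp⟩)
    · have hp2 := (subtermAt_node_cons_none h2 p).symm.trans hp
      cases hp2

theorem build_isRun (hσr : ∀ idx, σs idx [] = q1)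
    (hσ : ∀ idx, idx < mG → IsRun B (c idx) (σs idx)) :
    ∀ j off, j ≤ k - 1 → off + Cfun α j ≤ mG →
      IsRun (DAut ar' B q1 α k) (buildT α c j off) (buildρ α q1 σs j off) := by
  intro j
  induction j with
  | zero =>
    intro off _ hoff
    exact isRun_embed (hσ off (by have := Cfun_pos α 0; omega)) q1 α k
  | succ j ih =>
    intro off hk hoff
    have hC1 : 1 ≤ Cfun α j := Cfun_pos α j
    have hC2 : 2 * Cfun α j ≤ Cfun α (j + 1) := Cfun_succ_lb α j
    intro p s cc hp
    cases p with
    | nil =>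
      rw [buildT] at hp
      by_cases hA : α (j + 2) = true
      · rw [if_pos hA] at hp
        have hp' : Term.node (Sum.inl F1Sym.g)
            (pick3 (buildT α c j off) (buildT α c j (off + Cfun α j))
              (embed (c (off + 2 * Cfun α j)))) = Term.node s cc := by
          injection hp
        injection hp' with h1 h2
        subst h1
        have h2 := eq_of_heq h2
        subst h2
        refine Or.inr (Or.inr ⟨j + 1, by omega, hk, hA, ?_⟩)
        refine congrArg (Sigma.mk (Sum.inl F1Sym.g)) (congrArg₂ Prod.mk ?_ rfl).symm
        funext ii
        rcases ii with ⟨iv, hiv⟩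
        have h3 : iv < 3 := hiv
        interval_cases iv
        · show (if (0:ℕ) = 2 then stD q1 1 else stD q1 (j + 1))
            = buildρ α q1 σs (j + 1) off (0 :: [])
          rw [if_neg (by omega), buildρ_cons0, buildρ_nil hσr]
        · show (if (1:ℕ) = 2 then stD q1 1 else stD q1 (j + 1))
            = buildρ α q1 σs (j + 1) off (1 :: [])
          rw [if_neg (by omega), buildρ_cons1, buildρ_nil hσr]
        · show (if (2:ℕ) = 2 then stD q1 1 else stD q1 (j + 1))
            = buildρ α q1 σs (j + 1) off (2 :: [])
          rw [if_pos rfl, buildρ_cons2, hσr]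
          rfl
      · rw [if_neg hA] at hp
        have hp' : Term.node (Sum.inl F1Sym.f)
            (pick2 (buildT α c j off) (buildT α c j (off + Cfun α j)))
            = Term.node s cc := by
          injection hp
        injection hp' with h1 h2
        subst h1
        have h2 := eq_of_heq h2
        subst h2
        refine Or.inr (Or.inl ⟨j + 1, by omega, hk, by simpa using hA, ?_⟩)
        refine congrArg (Sigma.mk (Sum.inl F1Sym.f)) (congrArg₂ Prod.mk ?_ rfl).symm
        funext ii
        rcases ii with ⟨iv, hiv⟩
        have h2' : iv < 2 := hiv
        interval_cases iv
        · show stD q1 (j + 1) = buildρ α q1 σs (j + 1) off (0 :: [])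
          rw [buildρ_cons0, buildρ_nil hσr]
        · show stD q1 (j + 1) = buildρ α q1 σs (j + 1) off (1 :: [])
          rw [buildρ_cons1, buildρ_nil hσr]
    | cons i p' =>
      rcases buildT_succ_sub hp with ⟨rfl, hp'⟩ | ⟨rfl, hp'⟩ | ⟨rfl, hA, hp'⟩
      · exact ih off (by omega) (by omega) p' s cc hp'
      · exact ih (off + Cfun α j) (by omega) (by omega) p' s cc hp'
      · have hg := Cfun_succ_g α j hA
        exact isRun_embed (hσ (off + 2 * Cfun α j) (by omega)) q1 α k p' s cc hp'

end TagedAux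
namespace TagedAux

variable {S' : Type*} {ar' : S' → ℕ} {Q : Type*}
variable {B : TreeAut S' ar' Q} {q1 : Q} {α : ℕ → Bool} {k : ℕ}
variable {c : ℕ → Term S' ar'} {σs : ℕ → List ℕ → Q} {mG : ℕ}

/-- positions carrying `q1` inside an embedded code must be the root -/
theorem embed_sub_code
    (hσmem : ∀ idx, idx < mG → ∀ (p : List ℕ) (t' : Term S' ar'),
      subtermAt (c idx) p = some t' → σs idx p = q1 → p = [])
    {idx : ℕ} (hidx : idx < mG) {p : List ℕ} {t' : Term (F1Sym ⊕ S') (arU ar')}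
    (hp : subtermAt (embed (c idx)) p = some t') (hq : σs idx p = q1) :
    p = [] ∧ t' = embed (c idx) := by
  rw [subtermAt_embed] at hp
  rcases Option.map_eq_some_iff.mp hp with ⟨u, hu, he⟩
  have hnil := hσmem idx hidx p u hu hq
  subst hnil
  have hu' : u = c idx := by
    rw [subtermAt_nil] at hu
    injection hu with hu
    exact hu.symm
  exact ⟨rfl, by rw [← he, hu']⟩

theorem build_code
    (hσmem : ∀ idx, idx < mG → ∀ (p : List ℕ) (t' : Term S' ar'),
      subtermAt (c idx) p = some t' → σs idx p = q1 → p = []) :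
    ∀ j off, off + Cfun α j ≤ mG → ∀ (p : List ℕ) (t' : Term (F1Sym ⊕ S') (arU ar')),
      subtermAt (buildT α c j off) p = some t' →
      buildρ α q1 σs j off p = Sum.inl q1 →
      ∃ idx, off ≤ idx ∧ idx < off + Cfun α j ∧ t' = embed (c idx) := by
  intro j
  induction j with
  | zero =>
    intro off hoff p t' hp hρ
    rw [buildρ_zero] at hρ
    injection hρ with hq
    obtain ⟨hnil, ht⟩ := embed_sub_code hσmem (by have := Cfun_pos α 0; omega) hp hq
    exact ⟨off, le_refl _, by have : Cfun α 0 = 1 := rfl; omega, ht⟩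
  | succ j ih =>
    intro off hoff p t' hp hρ
    have hC1 : 1 ≤ Cfun α j := Cfun_pos α j
    have hC2 : 2 * Cfun α j ≤ Cfun α (j + 1) := Cfun_succ_lb α j
    cases p with
    | nil =>
      have hρ' : stD q1 (j + 2) = Sum.inl q1 := hρ
      rw [stD_ne_one (by omega)] at hρ'
      cases hρ'
    | cons i p' =>
      rcases buildT_succ_sub hp with ⟨rfl, hp'⟩ | ⟨rfl, hp'⟩ | ⟨rfl, hA, hp'⟩
      · rw [buildρ_cons0] at hρ
        obtain ⟨idx, h1, h2, h3⟩ := ih off (by omega) p' t' hp' hρ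
        exact ⟨idx, h1, by omega, h3⟩
      · rw [buildρ_cons1] at hρ
        obtain ⟨idx, h1, h2, h3⟩ := ih (off + Cfun α j) (by omega) p' t' hp' hρ
        exact ⟨idx, by omega, by omega, h3⟩
      · have hg := Cfun_succ_g α j hA
        rw [buildρ_cons2] at hρ
        injection hρ with hq
        obtain ⟨hnil, ht⟩ := embed_sub_code hσmem (by omega) hp' hq
        exact ⟨off + 2 * Cfun α j, by omega, by omega, ht⟩

end TagedAux
namespace TagedAux

variable {S' : Type*} {ar' : S' → ℕ} {Q : Type*}
variable {B : TreeAut S' ar' Q} {q1 : Q} {α : ℕ → Bool} {k : ℕ}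
variable {c : ℕ → Term S' ar'} {σs : ℕ → List ℕ → Q} {mG : ℕ}

theorem build_distinct
    (hσmem : ∀ idx, idx < mG → ∀ (p : List ℕ) (t' : Term S' ar'),
      subtermAt (c idx) p = some t' → σs idx p = q1 → p = [])
    (hcinj : ∀ i₁, i₁ < mG → ∀ i₂, i₂ < mG → c i₁ = c i₂ → i₁ = i₂) :
    ∀ j off, off + Cfun α j ≤ mG →
      ∀ (p q : List ℕ) (tp tq : Term (F1Sym ⊕ S') (arU ar')),
      subtermAt (buildT α c j off) p = some tp →
      subtermAt (buildT α c j off) q = some tq →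
      p ≠ q →
      buildρ α q1 σs j off p = Sum.inl q1 →
      buildρ α q1 σs j off q = Sum.inl q1 → tp ≠ tq := by
  intro j
  induction j with
  | zero =>
    intro off hoff p q tp tq hpp hqq hpq hρp hρq
    rw [buildρ_zero] at hρp hρq
    injection hρp with hρp
    injection hρq with hρq
    have hC0 : Cfun α 0 = 1 := rfl
    obtain ⟨hp0, -⟩ := embed_sub_code hσmem (by omega) hpp hρp
    obtain ⟨hq0, -⟩ := embed_sub_code hσmem (by omega) hqq hρq
    exact absurd (hp0.trans hq0.symm) hpq
  | succ j ih =>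
    intro off hoff p q tp tq hpp hqq hpq hρp hρq
    have hC1 : 1 ≤ Cfun α j := Cfun_pos α j
    have hC2 : 2 * Cfun α j ≤ Cfun α (j + 1) := Cfun_succ_lb α j
    cases p with
    | nil =>
      have hρ' : stD q1 (j + 2) = Sum.inl q1 := hρp
      rw [stD_ne_one (by omega)] at hρ'
      cases hρ'
    | cons i p' =>
      cases q with
      | nil =>
        have hρ' : stD q1 (j + 2) = Sum.inl q1 := hρq
        rw [stD_ne_one (by omega)] at hρ'
        cases hρ'
      | cons i' q' =>
        rcases buildT_succ_sub hpp with ⟨rfl, hp'⟩ | ⟨rfl, hp'⟩ | ⟨rfl, hAp, hp'⟩ <;>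
          rcases buildT_succ_sub hqq with ⟨rfl, hq'⟩ | ⟨rfl, hq'⟩ | ⟨rfl, hAq, hq'⟩
        -- (0,0)
        · rw [buildρ_cons0] at hρp hρq
          exact ih off (by omega) p' q' tp tq hp' hq'
            (fun h => hpq (by rw [h])) hρp hρq
        -- (0,1)
        · rw [buildρ_cons0] at hρp
          rw [buildρ_cons1] at hρq
          obtain ⟨ip, hip1, hip2, htp⟩ := build_code hσmem j off (by omega) p' tp hp' hρp
          obtain ⟨iq, hiq1, hiq2, htq⟩ := build_code hσmem j (off + Cfun α j) (by omega) q' tq hq' hρq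
          intro h
          rw [htp, htq] at h
          have := hcinj ip (by omega) iq (by omega) (embed_injective h)
          omega
        -- (0,2)
        · have hg := Cfun_succ_g α j hAq
          rw [buildρ_cons0] at hρp
          rw [buildρ_cons2] at hρq
          injection hρq with hρq
          obtain ⟨ip, hip1, hip2, htp⟩ := build_code hσmem j off (by omega) p' tp hp' hρp
          obtain ⟨-, htq⟩ := embed_sub_code hσmem (by omega) hq' hρq
          intro h
          rw [htp, htq] at h
          have := hcinj ip (by omega) (off + 2 * Cfun α j) (by omega) (embed_injective h)
          omega
        -- (1,0)
        · rw [buildρ_cons1] at hρp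
          rw [buildρ_cons0] at hρq
          obtain ⟨ip, hip1, hip2, htp⟩ := build_code hσmem j (off + Cfun α j) (by omega) p' tp hp' hρp
          obtain ⟨iq, hiq1, hiq2, htq⟩ := build_code hσmem j off (by omega) q' tq hq' hρq
          intro h
          rw [htp, htq] at h
          have := hcinj ip (by omega) iq (by omega) (embed_injective h)
          omega
        -- (1,1)
        · rw [buildρ_cons1] at hρp hρq
          exact ih (off + Cfun α j) (by omega) p' q' tp tq hp' hq'
            (fun h => hpq (by rw [h])) hρp hρq
        -- (1,2)
        · have hg := Cfun_succ_g α j hAq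
          rw [buildρ_cons1] at hρp
          rw [buildρ_cons2] at hρq
          injection hρq with hρq
          obtain ⟨ip, hip1, hip2, htp⟩ := build_code hσmem j (off + Cfun α j) (by omega) p' tp hp' hρp
          obtain ⟨-, htq⟩ := embed_sub_code hσmem (by omega) hq' hρq
          intro h
          rw [htp, htq] at h
          have := hcinj ip (by omega) (off + 2 * Cfun α j) (by omega) (embed_injective h)
          omega
        -- (2,0)
        · have hg := Cfun_succ_g α j hAp
          rw [buildρ_cons2] at hρp
          injection hρp with hρp
          rw [buildρ_cons0] at hρq
          obtain ⟨-, htp⟩ := embed_sub_code hσmem (by omega) hp' hρp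
          obtain ⟨iq, hiq1, hiq2, htq⟩ := build_code hσmem j off (by omega) q' tq hq' hρq
          intro h
          rw [htp, htq] at h
          have := hcinj (off + 2 * Cfun α j) (by omega) iq (by omega) (embed_injective h)
          omega
        -- (2,1)
        · have hg := Cfun_succ_g α j hAp
          rw [buildρ_cons2] at hρp
          injection hρp with hρp
          rw [buildρ_cons1] at hρq
          obtain ⟨-, htp⟩ := embed_sub_code hσmem (by omega) hp' hρp
          obtain ⟨iq, hiq1, hiq2, htq⟩ := build_code hσmem j (off + Cfun α j) (by omega) q' tq hq' hρq
          intro h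
          rw [htp, htq] at h
          have := hcinj (off + 2 * Cfun α j) (by omega) iq (by omega) (embed_injective h)
          omega
        -- (2,2)
        · have hg := Cfun_succ_g α j hAp
          rw [buildρ_cons2] at hρp hρq
          injection hρp with hρp
          injection hρq with hρq
          obtain ⟨hp0, -⟩ := embed_sub_code hσmem (by omega) hp' hρp
          obtain ⟨hq0, -⟩ := embed_sub_code hσmem (by omega) hq' hρq
          exact absurd (by rw [hp0, hq0]) hpq

end TagedAux

open TagedAux

/-- Let `G = (V, E)` be a directed graph with `n = |V| ≥ 2` vertices (here
`n = m + 2`), and let `m_G ≥ 1` be the number of paths of length `n-1` in `G`,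
with binary representation `α₁ … α_k`.  Let `B` be any tree automaton over
`F₂` with unique final state `q1` whose language is exactly the set of
encodings `[A_{w_{n-1}} … A_{w_0}]` of non-Hamiltonian paths
`(w_0, …, w_{n-1})` of length `n-1` in `G`, and let
`D_G = (Q ∪ Q₁, (Δ ∪ Δ₁) \ {A → q₁}, {q_k})` over `F₁ ∪ F₂` built from `B`
and `A_{m_G}` (the state `q₁` of `A_{m_G}` being identified with `q1`).
Then the TAGED `(D_G, ∅, {(q₁, q₁)})` accepts the empty language iff `G`
has a Hamiltonian path. -/
theorem Taged_empty_iff_hamiltonian {V : Type*} [Fintype V] [Nonempty V]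
    (E : V → V → Prop) (m : ℕ) (hcard : Fintype.card V = m + 2)
    (mG : ℕ) (hmG : mG = Nat.card {w : Fin (m + 2) → V // IsPath E w})
    (hmG1 : 1 ≤ mG)
    (α : ℕ → Bool) (k : ℕ) (hk : 1 ≤ k) (hα : α 1 = true)
    (hbin : mG = ∑ i ∈ Finset.Icc 1 k, if α i then 2 ^ (k - i) else 0)
    {Q : Type*} (B : TreeAut (F2Sym V) (ar2 V) Q) (q1 : Q)
    (hBf : B.final = {q1})
    (hLB : ∀ t : Term (F2Sym V) (ar2 V), Accepts B t ↔
      ∃ w : Fin (m + 2) → V, IsPath E w ∧ ¬Function.Bijective w ∧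
        t = codeT (m + 1) w) :
    (¬ ∃ t : Term (F1Sym ⊕ F2Sym V) (arU (ar2 V)),
        TagedAccepts (DAut (ar2 V) B q1 α k) ∅ {(Sum.inl q1, Sum.inl q1)} t) ↔
    (∃ w : Fin (m + 2) → V, IsPath E w ∧ Function.Bijective w) := by
  classical
  have hfin : Finite {w : Fin (m + 2) → V // IsPath E w} := Subtype.finite
  have hbin' : mG = Ssum α k := hbin
  constructor
  · -- emptiness implies Hamiltonian path
    intro hempty
    by_contra hnoham
    push_neg at hnoham
    apply hempty
    -- enumeration of the mG (all non-Hamiltonian) paths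
    letI : Fintype {w : Fin (m + 2) → V // IsPath E w} := Fintype.ofFinite _
    have hcardeq : Fintype.card {w : Fin (m + 2) → V // IsPath E w} = mG := by
      rw [hmG, Nat.card_eq_fintype_card]
    let e := Fintype.equivFinOfCardEq hcardeq
    let c : ℕ → Term (F2Sym V) (ar2 V) := fun idx =>
      if h : idx < mG then codeT (m + 1) (e.symm ⟨idx, h⟩).val
      else codeT (m + 1) (fun _ => Classical.arbitrary V)
    have hcc : ∀ idx (h : idx < mG), c idx = codeT (m + 1) (e.symm ⟨idx, h⟩).val :=
      fun idx h => dif_pos h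
    have haccept : ∀ idx, idx < mG → Accepts B (c idx) := by
      intro idx h
      rw [hLB]
      exact ⟨(e.symm ⟨idx, h⟩).val, (e.symm ⟨idx, h⟩).property,
        hnoham _ (e.symm ⟨idx, h⟩).property, hcc idx h⟩
    have hex : ∀ idx, ∃ σ : List ℕ → Q, σ [] = q1 ∧ (idx < mG → IsRun B (c idx) σ) := by
      intro idx
      by_cases h : idx < mG
      · obtain ⟨σ, hrun, hfin2⟩ := haccept idx h
        rw [hBf] at hfin2
        exact ⟨σ, hfin2, fun _ => hrun⟩
      · exact ⟨fun _ => q1, rfl, fun hc => absurd hc h⟩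
    choose σs hσr hσrun using hex
    have hLB' : ∀ t, Accepts B t → ∃ w : Fin (m + 2) → V, t = codeT (m + 1) w := by
      intro t ht
      obtain ⟨w, -, -, hw⟩ := (hLB t).mp ht
      exact ⟨w, hw⟩
    have hσmem : ∀ idx, idx < mG → ∀ (p : List ℕ) (t' : Term (F2Sym V) (ar2 V)),
        subtermAt (c idx) p = some t' → σs idx p = q1 → p = [] := by
      intro idx hidx
      have hrun : IsRun B (codeT (m + 1) (e.symm ⟨idx, hidx⟩).val) (σs idx) := by
        rw [← hcc idx hidx]; exact hσrun idx hidx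
      have := no_inner_q1 hBf hLB' hrun
      intro p t' hp hq
      exact this p t' (by rw [← hcc idx hidx]; exact hp) hq
    have hcinj : ∀ i₁, i₁ < mG → ∀ i₂, i₂ < mG → c i₁ = c i₂ → i₁ = i₂ := by
      intro i₁ h₁ i₂ h₂ hc12
      rw [hcc i₁ h₁, hcc i₂ h₂] at hc12
      have h3 := codeT_injective (m + 1) _ _ hc12
      have h4 : e.symm ⟨i₁, h₁⟩ = e.symm ⟨i₂, h₂⟩ := Subtype.ext h3
      have h5 := e.symm.injective h4
      exact congrArg Fin.val h5
    have hmGC : Cfun α (k - 1) = mG := by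
      rw [Cfun_eq_Ssum hα, show k - 1 + 1 = k by omega, hbin']
    refine ⟨buildT α c (k - 1) 0, buildρ α q1 σs (k - 1) 0, ?_, ?_, ?_⟩
    · exact build_isRun hσr hσrun (k - 1) 0 (le_refl _) (by omega)
    · show buildρ α q1 σs (k - 1) 0 [] ∈ ({stD q1 k} : Set (Q ⊕ ℕ))
      rw [Set.mem_singleton_iff, buildρ_nil hσr, show k - 1 + 1 = k by omega]
    · intro p q tp tq hp hq
      constructor
      · intro hmem
        exact absurd hmem (Set.notMem_empty _)
      · intro hne hmem
        rw [Set.mem_singleton_iff] at hmem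
        have h1 := congrArg Prod.fst hmem
        have h2 := congrArg Prod.snd hmem
        exact build_distinct hσmem hcinj (k - 1) 0 (by omega) p q tp tq hp hq hne h1 h2
  · -- Hamiltonian path implies emptiness
    rintro ⟨wH, hwHpath, hwHbij⟩ ⟨t, ρ, hrun, hfin2, hcon⟩
    have hfin' : ρ [] = stD q1 k := hfin2
    obtain ⟨P, hPcard, hP⟩ := count_q1 hα hrun k hk [] t (subtermAt_nil t) hfin'
    have hPm : mG ≤ P.card := by rw [hbin']; exact hPcard
    have hval : ∀ x : {x // x ∈ P}, ∃ w : Fin (m + 2) → V,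
        (IsPath E w ∧ ¬Function.Bijective w) ∧
        subtermAt t x.val = some (embed (codeT (m + 1) w)) := by
      rintro ⟨q, hq⟩
      obtain ⟨-, hsome, hρq⟩ := hP q hq
      obtain ⟨tq, htq⟩ := Option.isSome_iff_exists.mp hsome
      obtain ⟨t₂, ht₂⟩ := extract_embed hrun tq q q1 htq hρq
      obtain ⟨σ, hσrun2, hσroot⟩ := extract_Brun hrun (ht₂ ▸ htq) hρq
      have hacc : Accepts B t₂ := ⟨σ, hσrun2, by rw [hBf]; exact hσroot⟩
      obtain ⟨w, hwp, hwnb, hwe⟩ := (hLB t₂).mp hacc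
      exact ⟨w, ⟨hwp, hwnb⟩, by rw [← hwe, ← ht₂]; exact htq⟩
    choose φ hφprop hφsub using hval
    have hφinj : Function.Injective
        (fun x : {x // x ∈ P} => (⟨φ x, (hφprop x).1⟩ : {w : Fin (m + 2) → V // IsPath E w})) := by
      intro x y hxy
      by_contra hne
      have hvne : x.val ≠ y.val := fun h => hne (Subtype.ext h)
      obtain ⟨-, -, hρx⟩ := hP x.val x.property
      obtain ⟨-, -, hρy⟩ := hP y.val y.property
      have hmem : (ρ x.val, ρ y.val) ∈ ({(Sum.inl q1, Sum.inl q1)} :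
          Set ((Q ⊕ ℕ) × (Q ⊕ ℕ))) := by
        rw [Set.mem_singleton_iff, hρx, hρy]
      have hneq := (hcon x.val y.val _ _ (hφsub x) (hφsub y)).2 hvne hmem
      apply hneq
      have hφeq : φ x = φ y := congrArg Subtype.val hxy
      rw [hφeq]
    have hnotmem : (⟨wH, hwHpath⟩ : {w : Fin (m + 2) → V // IsPath E w}) ∉
        Set.range (fun x : {x // x ∈ P} =>
          (⟨φ x, (hφprop x).1⟩ : {w : Fin (m + 2) → V // IsPath E w})) := by
      rintro ⟨x, hx⟩
      have : φ x = wH := congrArg Subtype.val hx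
      exact (hφprop x).2 (this ▸ hwHbij)
    letI : Fintype {w : Fin (m + 2) → V // IsPath E w} := Fintype.ofFinite _
    have hlt := Fintype.card_lt_of_injective_of_notMem _ hφinj hnotmem
    rw [Fintype.card_coe] at hlt
    have hcards : Fintype.card {w : Fin (m + 2) → V // IsPath E w} = mG := by
      rw [hmG, Nat.card_eq_fintype_card]
    omega
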